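/- arXiv:2405.20809 — 4 statements merged into one kernel-verified Lean document; each statement's English description precedes it below -/
import Mathlib

section
/- Let G be a compact Lie group and p : E → B a G-fibration such that the fixed-point set E^G is nonempty. Let e ∈ E^G and F := p^{-1}(p(e)). Then F is a G-invariant subspace of E, and for every n ≥ 2, TC_{G,n}(F) ≤ TC_{G,n}[p : E → B]. -/
open Set

noncomputable section

/-- Two maps `f g : X → Y` are `G`-homotopic on a subset `S ⊆ X`, with respect to the
actions `σX` on `X` and `σY` on `Y`. -/
def GHomotopicOn (G : Type*) {X Y : Type*} [TopologicalSpace X] [TopologicalSpace Y]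
    (σX : G → X → X) (σY : G → Y → Y) (f g : X → Y) (S : Set X) : Prop :=
  ∃ H : X × unitInterval → Y,
    ContinuousOn H (S ×ˢ (Set.univ : Set unitInterval)) ∧
    (∀ x ∈ S, H (x, 0) = f x) ∧
    (∀ x ∈ S, H (x, 1) = g x) ∧
    (∀ a : G, ∀ x ∈ S, ∀ t, H (σX a x, t) = σY a (H (x, t)))

/-- The equivariant sectional category `secat_G(p)` of a map `p : E → B`, with respect to
actions `σE` on `E` and `σB` on `B`: the least `k` such that `B` is covered by `k`
`G`-invariant open sets, each admitting a continuous equivariant homotopy section of `p`;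
`⊤` if there is no such `k`. -/
def eqSecat (G : Type*) {E B : Type*} [TopologicalSpace E] [TopologicalSpace B]
    (σE : G → E → E) (σB : G → B → B) (p : E → B) : ℕ∞ :=
  sInf {N : ℕ∞ | ∃ k : ℕ, N = (k : ℕ∞) ∧ ∃ U : Fin k → Set B,
    (∀ i, IsOpen (U i)) ∧
    (∀ i, ∀ a : G, ∀ b ∈ U i, σB a b ∈ U i) ∧
    (∀ b : B, ∃ i, b ∈ U i) ∧
    (∀ i, ∃ s : B → E, ContinuousOn s (U i) ∧
      (∀ a : G, ∀ b ∈ U i, s (σB a b) = σE a (s b)) ∧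
      GHomotopicOn G σB σB (p ∘ s) id (U i))}

/-- A `G`-invariant open subset `U` of `X` is `G`-categorical if the inclusion `U ↪ X`
is `G`-homotopic to a map taking values in a single orbit. -/
def GCategoricalSet (G : Type*) {X : Type*} [TopologicalSpace X]
    (σ : G → X → X) (U : Set X) : Prop :=
  IsOpen U ∧ (∀ a : G, ∀ x ∈ U, σ a x ∈ U) ∧
  ∃ x₀ : X, ∃ H : X × unitInterval → X,
    ContinuousOn H (U ×ˢ (Set.univ : Set unitInterval)) ∧
    (∀ x ∈ U, H (x, 0) = x) ∧
    (∀ x ∈ U, ∃ a : G, H (x, 1) = σ a x₀) ∧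
    (∀ a : G, ∀ x ∈ U, ∀ t, H (σ a x, t) = σ a (H (x, t)))

/-- The equivariant (Lusternik–Schnirelmann) category `cat_G(X)`: the least number of
`G`-categorical open sets covering `X`. -/
def eqCat (G : Type*) {X : Type*} [TopologicalSpace X] (σ : G → X → X) : ℕ∞ :=
  sInf {N : ℕ∞ | ∃ k : ℕ, N = (k : ℕ∞) ∧ ∃ U : Fin k → Set X,
    (∀ x : X, ∃ i, x ∈ U i) ∧ (∀ i, GCategoricalSet G σ (U i))}

/-- The time `i/(n-1)` in the unit interval, for `i : Fin n`. -/
def seqTime (n : ℕ) (i : Fin n) : unitInterval :=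
  ⟨(i : ℝ) / ((n : ℝ) - 1), by
    have h0 : 0 < n := i.pos
    have h1 : (0 : ℝ) ≤ (n : ℝ) - 1 := by
      have : (1 : ℝ) ≤ (n : ℝ) := by exact_mod_cast h0
      linarith
    refine ⟨div_nonneg (Nat.cast_nonneg _) h1, ?_⟩
    rcases eq_or_lt_of_le h1 with h | h
    · rw [← h, div_zero]; norm_num
    · rw [div_le_one h]
      have : ((i : ℕ) : ℝ) + 1 ≤ (n : ℝ) := by exact_mod_cast i.is_lt
      linarith⟩

/-- The generalized free path space fibration
`π_n : X^I → X^n`, `γ ↦ (γ(0), γ(1/(n-1)), …, γ(1))`. -/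
def piNMap (X : Type*) [TopologicalSpace X] (n : ℕ) :
    C(unitInterval, X) → (Fin n → X) :=
  fun γ i => γ (seqTime n i)

/-- The action induced on the free path space `X^I` by an action on `X`. -/
def pathAct {G X : Type*} [TopologicalSpace X] (σ : G → X → X)
    (hc : ∀ a : G, Continuous (σ a)) : G → C(unitInterval, X) → C(unitInterval, X) :=
  fun a γ => ⟨fun t => σ a (γ t), (hc a).comp γ.continuous⟩

/-- The diagonal action on `X^n` induced by an action on `X`. -/
def diagAct {G X : Type*} (σ : G → X → X) (n : ℕ) : G → (Fin n → X) → (Fin n → X) :=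
  fun a x i => σ a (x i)

/-- The sequential equivariant topological complexity `TC_{G,n}(X) := secat_G(π_n)`. -/
def eqTC (G : Type*) {X : Type*} [TopologicalSpace X] (σ : G → X → X)
    (hc : ∀ a : G, Continuous (σ a)) (n : ℕ) : ℕ∞ :=
  eqSecat G (pathAct σ hc) (diagAct σ n) (piNMap X n)

/-- The `n`-fold fibre product `E^n_B` of `p : E → B`. -/
def FibProd {E B : Type*} (p : E → B) (n : ℕ) : Type _ :=
  {x : Fin n → E // ∀ i j, p (x i) = p (x j)}

instance {E B : Type*} [TopologicalSpace E] (p : E → B) (n : ℕ) :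
    TopologicalSpace (FibProd p n) :=
  inferInstanceAs (TopologicalSpace {x : Fin n → E // ∀ i j, p (x i) = p (x j)})

/-- The space `E^I_B` of paths in `E` lying in a single fibre of `p : E → B`. -/
def ParPath {E B : Type*} [TopologicalSpace E] (p : E → B) : Type _ :=
  {γ : C(unitInterval, E) // ∀ s t : unitInterval, p (γ s) = p (γ t)}

instance {E B : Type*} [TopologicalSpace E] (p : E → B) :
    TopologicalSpace (ParPath p) :=
  inferInstanceAs (TopologicalSpace
    {γ : C(unitInterval, E) // ∀ s t : unitInterval, p (γ s) = p (γ t)})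

/-- The parametrized endpoint fibration `Π_n : E^I_B → E^n_B`. -/
def PiN {E B : Type*} [TopologicalSpace E] (p : E → B) (n : ℕ) :
    ParPath p → FibProd p n :=
  fun γ => ⟨fun i => γ.1 (seqTime n i), fun _ _ => γ.2 _ _⟩

/-- The action induced on `E^n_B` by a fibrewise-compatible action on `E`. -/
def fibProdAct {G E B : Type*} (σE : G → E → E) (p : E → B)
    (hp : ∀ a : G, ∀ e e' : E, p e = p e' → p (σE a e) = p (σE a e')) (n : ℕ) :
    G → FibProd p n → FibProd p n :=
  fun a x => ⟨fun i => σE a (x.1 i), fun i j => hp a _ _ (x.2 i j)⟩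

/-- The action induced on `E^I_B` by a fibrewise-compatible action on `E`. -/
def parPathAct {G E B : Type*} [TopologicalSpace E] (σE : G → E → E)
    (hc : ∀ a : G, Continuous (σE a)) (p : E → B)
    (hp : ∀ a : G, ∀ e e' : E, p e = p e' → p (σE a e) = p (σE a e')) :
    G → ParPath p → ParPath p :=
  fun a γ => ⟨⟨fun t => σE a (γ.1 t), (hc a).comp γ.1.continuous⟩,
    fun s t => hp a _ _ (γ.2 s t)⟩

/-- The sequential equivariant parametrized topological complexity
`TC_{G,n}[p : E → B] := secat_G(Π_n : E^I_B → E^n_B)`. -/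
def eqPTC (G : Type*) {E B : Type*} [TopologicalSpace E] (σE : G → E → E)
    (hc : ∀ a : G, Continuous (σE a)) (p : E → B)
    (hp : ∀ a : G, ∀ e e' : E, p e = p e' → p (σE a e) = p (σE a e')) (n : ℕ) : ℕ∞ :=
  eqSecat G (parPathAct σE hc p hp) (fibProdAct σE p hp n) (PiN p n)

/-- `σ` is a continuous action of the topological group `G` on `X`,
i.e. `X` is a `G`-space. -/
def IsGAction (G : Type*) [Group G] [TopologicalSpace G] {X : Type*} [TopologicalSpace X]
    (σ : G → X → X) : Prop :=
  (∀ x, σ 1 x = x) ∧ (∀ a b x, σ (a * b) x = σ a (σ b x)) ∧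
  Continuous (fun q : G × X => σ q.1 q.2)

/-- `p : E → B` is a `G`-fibration: a continuous equivariant map with the `G`-homotopy
lifting property with respect to all `G`-spaces. -/
def IsGFibration (G : Type*) [Group G] [TopologicalSpace G] {E : Type u} {B : Type v}
    [TopologicalSpace E] [TopologicalSpace B]
    (σE : G → E → E) (σB : G → B → B) (p : E → B) : Prop :=
  Continuous p ∧ (∀ a e, p (σE a e) = σB a (p e)) ∧
  ∀ (X : Type (max u v)) (_ : TopologicalSpace X) (σX : G → X → X), IsGAction G σX →
    ∀ (f : X → E) (h : X × unitInterval → B),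
      Continuous f → (∀ a x, f (σX a x) = σE a (f x)) →
      Continuous h → (∀ a x t, h (σX a x, t) = σB a (h (x, t))) →
      (∀ x, h (x, 0) = p (f x)) →
      ∃ hl : X × unitInterval → E, Continuous hl ∧
        (∀ a x t, hl (σX a x, t) = σE a (hl (x, t))) ∧
        (∀ x, hl (x, 0) = f x) ∧ (∀ x t, p (hl (x, t)) = h (x, t))

/-- A `G`-space is `G`-connected if all fixed point sets of closed subgroups
are path-connected. -/
def GConnected (G : Type*) [Group G] [TopologicalSpace G] {X : Type*} [TopologicalSpace X]
    (σ : G → X → X) : Prop :=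
  ∀ H : Subgroup G, IsClosed (H : Set G) →
    IsPathConnected {x : X | ∀ h ∈ H, σ h x = x}

/-- A `G`-space is `G`-contractible if its identity map is `G`-homotopic to a map
taking values in a single orbit. -/
def GContractible (G : Type*) {X : Type*} [TopologicalSpace X] (σ : G → X → X) : Prop :=
  ∃ x₀ : X, ∃ H : X × unitInterval → X, Continuous H ∧
    (∀ x, H (x, 0) = x) ∧
    (∀ x, ∃ a : G, H (x, 1) = σ a x₀) ∧
    (∀ a : G, ∀ x t, H (σ a x, t) = σ a (H (x, t)))

/-- Fibrewise `G`-homotopy between fibrewise maps `f g : E → E'` over `B`. -/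
def FibrewiseGHomotopic (G : Type*) {E E' B : Type*} [TopologicalSpace E]
    [TopologicalSpace E'] (σE : G → E → E) (σE' : G → E' → E')
    (p : E → B) (p' : E' → B) (f g : E → E') : Prop :=
  ∃ H : E × unitInterval → E', Continuous H ∧
    (∀ x, H (x, 0) = f x) ∧ (∀ x, H (x, 1) = g x) ∧
    (∀ a : G, ∀ x t, H (σE a x, t) = σE' a (H (x, t))) ∧
    (∀ x t, p' (H (x, t)) = p x)

end

/-!
Restrict an equivariant homotopy section `s` of `Π_n` over an invariant open set `U ⊆ E^n_B`
to the tuples `y` lying in the fibre `F` over the fixed point `p e`. The homotopy from `Π_n ∘ s`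
to the identity moves the base point along a path `c` in `B` ending at `p e`. Lifting `c`, the
`G`-homotopy lifting property transports the path `s y` into a path in `F`; its samples and `y`
are the ends of two lifts of `c` with a common start, which are fibrewise homotopic by a second
application of the lifting property. All lifts are `G`-equivariant, so the preimages of the sets
`U` form a cover of `F^n` of the same size witnessing `TC_{G,n}(F)`.
-/

universe u v w

section GAction

variable {G : Type*} [Group G] [TopologicalSpace G]

theorem isGAction_smul (X : Type*) [TopologicalSpace X] [MulAction G X] [ContinuousSMul G X] :
    IsGAction G (fun (a : G) (x : X) => a • x) :=
  ⟨one_smul G, mul_smul, continuous_smul⟩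

variable {X : Type*} [TopologicalSpace X] {σ : G → X → X}

theorem IsGAction.subtype (hσ : IsGAction G σ) {S : Set X} (hS : ∀ a, ∀ x ∈ S, σ a x ∈ S) :
    IsGAction G (fun a (x : S) => (⟨σ a x, hS a x x.2⟩ : S)) :=
  ⟨fun x => Subtype.ext (hσ.1 x), fun a b x => Subtype.ext (hσ.2.1 a b x),
    (hσ.2.2.comp (continuous_fst.prodMk (continuous_subtype_val.comp continuous_snd))).subtype_mk _⟩

theorem IsGAction.diagAct (hσ : IsGAction G σ) (n : ℕ) : IsGAction G (diagAct σ n) :=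
  ⟨fun x => funext fun i => hσ.1 (x i), fun a b x => funext fun i => hσ.2.1 a b (x i),
    continuous_pi fun i =>
      hσ.2.2.comp (continuous_fst.prodMk ((continuous_apply i).comp continuous_snd))⟩

theorem IsGAction.prodFst (hσ : IsGAction G σ) (Y : Type*) [TopologicalSpace Y] :
    IsGAction G (fun a (q : X × Y) => (σ a q.1, q.2)) :=
  ⟨fun q => Prod.ext (hσ.1 q.1) rfl, fun a b q => Prod.ext (hσ.2.1 a b q.1) rfl,
    (hσ.2.2.comp (continuous_fst.prodMk (continuous_fst.comp continuous_snd))).prodMk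
      (continuous_snd.comp continuous_snd)⟩

theorem IsGAction.uliftUp (hσ : IsGAction G σ) :
    IsGAction G (fun a (x : ULift.{w} X) => ULift.up (σ a x.down)) :=
  ⟨fun x => congrArg ULift.up (hσ.1 x.down), fun a b x => congrArg ULift.up (hσ.2.1 a b x.down),
    continuous_uliftUp.comp
      (hσ.2.2.comp (continuous_fst.prodMk (continuous_uliftDown.comp continuous_snd)))⟩

end GAction

section Homotopies

variable {X Y : Type*}

noncomputable def homotopyConcat (F₁ F₂ : X × unitInterval → Y) : X × unitInterval → Y := fun q =>
  if (q.2 : ℝ) ≤ 1 / 2 then F₁ (q.1, Set.projIcc 0 1 zero_le_one (2 * q.2))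
  else F₂ (q.1, Set.projIcc 0 1 zero_le_one (2 * q.2 - 1))

variable {F₁ F₂ : X × unitInterval → Y}

@[simp]
theorem homotopyConcat_zero (x : X) : homotopyConcat F₁ F₂ (x, 0) = F₁ (x, 0) := by
  simp [homotopyConcat]

@[simp]
theorem homotopyConcat_one (x : X) : homotopyConcat F₁ F₂ (x, 1) = F₂ (x, 1) := by
  norm_num [homotopyConcat]

theorem Continuous.homotopyConcat [TopologicalSpace X] [TopologicalSpace Y]
    (h₁ : Continuous F₁) (h₂ : Continuous F₂) (h : ∀ x, F₁ (x, 1) = F₂ (x, 0)) :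
    Continuous (homotopyConcat F₁ F₂) := by
  have ht : Continuous fun q : X × unitInterval => (q.2 : ℝ) :=
    continuous_subtype_val.comp continuous_snd
  refine Continuous.if_le (h₁.comp (continuous_fst.prodMk ?_))
    (h₂.comp (continuous_fst.prodMk ?_)) ht continuous_const fun q hq => ?_
  · exact continuous_projIcc.comp (continuous_const.mul ht)
  · exact continuous_projIcc.comp ((continuous_const.mul ht).sub continuous_const)
  · norm_num [hq, h]

theorem homotopyConcat_equivariant {G : Type*} {σX : G → X → X} {σY : G → Y → Y}
    (h₁ : ∀ a x t, F₁ (σX a x, t) = σY a (F₁ (x, t)))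
    (h₂ : ∀ a x t, F₂ (σX a x, t) = σY a (F₂ (x, t))) (a : G) (x : X) (t : unitInterval) :
    homotopyConcat F₁ F₂ (σX a x, t) = σY a (homotopyConcat F₁ F₂ (x, t)) := by
  unfold homotopyConcat
  split_ifs
  exacts [h₁ _ _ _, h₂ _ _ _]

theorem comp_homotopyConcat {Z : Type*} (g : Y → Z) :
    g ∘ homotopyConcat F₁ F₂ = homotopyConcat (g ∘ F₁) (g ∘ F₂) :=
  funext fun _ => apply_ite g _ _ _

theorem homotopyConcat_induction {P : X → Y → Prop} (h₁ : ∀ x t, P x (F₁ (x, t)))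
    (h₂ : ∀ x t, P x (F₂ (x, t))) (x : X) (t : unitInterval) :
    P x (homotopyConcat F₁ F₂ (x, t)) := by
  unfold homotopyConcat
  split_ifs
  exacts [h₁ _ _, h₂ _ _]

/-- A null-homotopy of the loop `c⁻¹ · c` through loops in which `c` is only run on `[t, 1]`,
so that it stays at `c (x, 1)` on the sides and on top of the square. -/
noncomputable def backtrackHomotopy (c : X × unitInterval → Y) :
    (X × unitInterval) × unitInterval → Y := fun q =>
  homotopyConcat (fun r => c (r.1.1, max (unitInterval.symm r.2) r.1.2))
    (fun r => c (r.1.1, max r.2 r.1.2)) ((q.1.1, q.2), q.1.2)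

variable {c : X × unitInterval → Y}

theorem Continuous.backtrackHomotopy [TopologicalSpace X] [TopologicalSpace Y] (hc : Continuous c) :
    Continuous (backtrackHomotopy c) := by
  refine (Continuous.homotopyConcat ?_ ?_ fun r => by simp).comp
    (((continuous_fst.comp continuous_fst).prodMk continuous_snd).prodMk
      (continuous_snd.comp continuous_fst))
  · exact hc.comp ((continuous_fst.comp continuous_fst).prodMk
      ((unitInterval.continuous_symm.comp continuous_snd).max (continuous_snd.comp continuous_fst)))
  · exact hc.comp ((continuous_fst.comp continuous_fst).prodMk
      (continuous_snd.max (continuous_snd.comp continuous_fst)))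

theorem backtrackHomotopy_equivariant {G : Type*} {σX : G → X → X} {σY : G → Y → Y}
    (hcG : ∀ a x t, c (σX a x, t) = σY a (c (x, t))) (a : G) (q : X × unitInterval)
    (t : unitInterval) :
    backtrackHomotopy c ((σX a q.1, q.2), t) = σY a (backtrackHomotopy c (q, t)) :=
  homotopyConcat_equivariant (σX := fun a r => (σX a r.1, r.2)) (fun a r _ => hcG a r.1 _)
    (fun a r _ => hcG a r.1 _) a (q.1, t) q.2

theorem backtrackHomotopy_zero (q : X × unitInterval) :
    backtrackHomotopy c (q, 0) = homotopyConcat (fun r => c (r.1, unitInterval.symm r.2)) c q := by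
  simp [backtrackHomotopy, homotopyConcat]

theorem backtrackHomotopy_left (x : X) (t : unitInterval) :
    backtrackHomotopy c ((x, 0), t) = c (x, 1) := by
  simp [backtrackHomotopy, unitInterval.le_one']

theorem backtrackHomotopy_right (x : X) (t : unitInterval) :
    backtrackHomotopy c ((x, 1), t) = c (x, 1) := by
  simp [backtrackHomotopy, unitInterval.le_one']

theorem backtrackHomotopy_top (x : X) (θ : unitInterval) :
    backtrackHomotopy c ((x, θ), 1) = c (x, 1) := by
  simp [backtrackHomotopy, homotopyConcat, unitInterval.le_one']

variable {W : (X × unitInterval) × unitInterval → Y}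

noncomputable def squareBoundary (W : (X × unitInterval) × unitInterval → Y) :
    X × unitInterval → Y :=
  homotopyConcat (homotopyConcat (fun q => W ((q.1, 0), q.2)) (fun q => W (q, 1)))
    (fun q => W ((q.1, 1), unitInterval.symm q.2))

@[simp]
theorem squareBoundary_zero (x : X) : squareBoundary W (x, 0) = W ((x, 0), 0) := by
  simp [squareBoundary]

@[simp]
theorem squareBoundary_one (x : X) : squareBoundary W (x, 1) = W ((x, 1), 0) := by
  simp [squareBoundary]

theorem Continuous.squareBoundary [TopologicalSpace X] [TopologicalSpace Y] (hW : Continuous W) :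
    Continuous (squareBoundary W) := by
  refine Continuous.homotopyConcat (Continuous.homotopyConcat ?_ ?_ fun x => rfl) ?_
    fun x => by simp
  · exact hW.comp ((continuous_fst.prodMk continuous_const).prodMk continuous_snd)
  · exact hW.comp (continuous_id.prodMk continuous_const)
  · exact hW.comp ((continuous_fst.prodMk continuous_const).prodMk
      (unitInterval.continuous_symm.comp continuous_snd))

theorem squareBoundary_equivariant {G : Type*} {σX : G → X → X} {σY : G → Y → Y}
    (hWG : ∀ a q t, W ((σX a q.1, q.2), t) = σY a (W (q, t))) (a : G) (x : X)
    (t : unitInterval) : squareBoundary W (σX a x, t) = σY a (squareBoundary W (x, t)) :=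
  homotopyConcat_equivariant (homotopyConcat_equivariant (fun a x t => hWG a (x, 0) t)
    (fun a x t => hWG a (x, t) 1)) (fun a x _ => hWG a (x, 1) _) a x t

theorem squareBoundary_induction {P : X → Y → Prop} (hleft : ∀ x t, P x (W ((x, 0), t)))
    (htop : ∀ x θ, P x (W ((x, θ), 1))) (hright : ∀ x t, P x (W ((x, 1), t))) (x : X)
    (t : unitInterval) : P x (squareBoundary W (x, t)) :=
  homotopyConcat_induction (homotopyConcat_induction hleft htop) (fun x _ => hright x _) x t

end Homotopies

section Lifting

variable {G : Type*} [Group G] [TopologicalSpace G] {E : Type u} {B : Type v}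
  [TopologicalSpace E] [TopologicalSpace B] {σE : G → E → E} {σB : G → B → B} {p : E → B}
  {X : Type u} [TopologicalSpace X] {σX : G → X → X}

theorem IsGFibration.liftHomotopy (hp : IsGFibration G σE σB p) (hX : IsGAction G σX)
    {f : X → E} (hf : Continuous f) (hfG : ∀ a x, f (σX a x) = σE a (f x))
    {h : X × unitInterval → B} (hh : Continuous h)
    (hhG : ∀ a x t, h (σX a x, t) = σB a (h (x, t))) (h0 : ∀ x, h (x, 0) = p (f x)) :
    ∃ L : X × unitInterval → E, Continuous L ∧ (∀ a x t, L (σX a x, t) = σE a (L (x, t))) ∧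
      (∀ x, L (x, 0) = f x) ∧ ∀ x t, p (L (x, t)) = h (x, t) := by
  obtain ⟨L, hL, hLG, hL0, hLp⟩ := hp.2.2 (ULift.{v} X) inferInstance _ hX.uliftUp
    (f ∘ ULift.down) (fun q => h (q.1.down, q.2)) (hf.comp continuous_uliftDown)
    (fun a x => hfG a x.down) (hh.comp ((continuous_uliftDown.comp continuous_fst).prodMk
      continuous_snd)) (fun a x t => hhG a x.down t) (fun x => h0 x.down)
  exact ⟨fun q => L (ULift.up q.1, q.2),
    hL.comp ((continuous_uliftUp.comp continuous_fst).prodMk continuous_snd),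
    fun a x t => hLG a (ULift.up x) t, fun x => hL0 (ULift.up x), fun x t => hLp (ULift.up x) t⟩

/-- The loop `α⁻¹ · β` lies over the null-homotopic loop `(p ∘ α)⁻¹ · (p ∘ α)`; lifting the
null-homotopy, the three other sides of the lifted square stay in the fibre over the end. -/
theorem IsGFibration.exists_fibrewise_homotopy_of_lifts (hp : IsGFibration G σE σB p)
    (hX : IsGAction G σX) {α β : X × unitInterval → E} (hα : Continuous α) (hβ : Continuous β)
    (hαG : ∀ a x t, α (σX a x, t) = σE a (α (x, t)))
    (hβG : ∀ a x t, β (σX a x, t) = σE a (β (x, t)))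
    (hpαβ : ∀ q, p (α q) = p (β q)) (h0 : ∀ x, α (x, 0) = β (x, 0)) :
    ∃ K : X × unitInterval → E, Continuous K ∧ (∀ a x t, K (σX a x, t) = σE a (K (x, t))) ∧
      (∀ x, K (x, 0) = α (x, 1)) ∧ (∀ x, K (x, 1) = β (x, 1)) ∧
      ∀ x t, p (K (x, t)) = p (α (x, 1)) := by
  set c : X × unitInterval → B := p ∘ α with hc_def
  have hc : Continuous c := hp.1.comp hα
  have hcG : ∀ a x t, c (σX a x, t) = σB a (c (x, t)) := fun a x t => by
    simp only [hc_def, Function.comp_apply, hαG, hp.2.1]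
  let loop : X × unitInterval → E := homotopyConcat (fun q => α (q.1, unitInterval.symm q.2)) β
  have hloop : Continuous loop := Continuous.homotopyConcat (hα.comp (continuous_fst.prodMk
    (unitInterval.continuous_symm.comp continuous_snd))) hβ (by simpa using h0)
  have hloopG : ∀ a q, loop (σX a q.1, q.2) = σE a (loop q) := fun a q =>
    homotopyConcat_equivariant (F₁ := fun q => α (q.1, unitInterval.symm q.2))
      (fun a x t => hαG a x _) hβG a q.1 q.2
  have hloop_base : ∀ q, backtrackHomotopy c (q, 0) = p (loop q) := fun q => by
    rw [backtrackHomotopy_zero, ← Function.comp_apply (f := p), comp_homotopyConcat]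
    congr
    exact funext fun r => hpαβ r
  obtain ⟨W, hW, hWG, hW0, hWp⟩ := hp.liftHomotopy (hX.prodFst unitInterval) hloop hloopG
    hc.backtrackHomotopy (backtrackHomotopy_equivariant hcG) hloop_base
  refine ⟨squareBoundary W, hW.squareBoundary, squareBoundary_equivariant hWG,
    fun x => by simp [hW0, loop], fun x => by simp [hW0, loop], fun x t => ?_⟩
  exact squareBoundary_induction (P := fun x y => p y = c (x, 1))
    (fun x t => by rw [hWp, backtrackHomotopy_left]) (fun x θ => by rw [hWp, backtrackHomotopy_top])
    (fun x t => by rw [hWp, backtrackHomotopy_right]) x t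

theorem IsGFibration.exists_transported_path (hp : IsGFibration G σE σB p) (hX : IsGAction G σX)
    {ι : Type} [TopologicalSpace ι] [DiscreteTopology ι] (τ : ι → unitInterval)
    {c : X × unitInterval → B} (hc : Continuous c)
    (hcG : ∀ a x t, c (σX a x, t) = σB a (c (x, t)))
    {s : X × unitInterval → E} (hs : Continuous s)
    (hsG : ∀ a x u, s (σX a x, u) = σE a (s (x, u))) (hsc : ∀ x u, p (s (x, u)) = c (x, 0))
    {H : X × unitInterval → ι → E} (hH : Continuous H)
    (hHG : ∀ a x t i, H (σX a x, t) i = σE a (H (x, t) i))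
    (hHc : ∀ x t i, p (H (x, t) i) = c (x, t)) (hH0 : ∀ x i, H (x, 0) i = s (x, τ i)) :
    ∃ s' : X × unitInterval → E, Continuous s' ∧ (∀ a x u, s' (σX a x, u) = σE a (s' (x, u))) ∧
      (∀ x u, p (s' (x, u)) = c (x, 1)) ∧
      ∃ K : X × unitInterval → ι → E, Continuous K ∧
        (∀ a x t i, K (σX a x, t) i = σE a (K (x, t) i)) ∧ (∀ x i, K (x, 0) i = s' (x, τ i)) ∧
        (∀ x, K (x, 1) = H (x, 1)) ∧ ∀ x t i, p (K (x, t) i) = c (x, 1) := by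
  obtain ⟨W, hW, hWG, hW0, hWp⟩ := hp.liftHomotopy (hX.prodFst unitInterval) hs
    (fun a q => hsG a q.1 q.2) (h := fun q => c (q.1.1, q.2))
    (hc.comp ((continuous_fst.comp continuous_fst).prodMk continuous_snd))
    (fun a q t => hcG a q.1 t) fun q => (hsc q.1 q.2).symm
  refine ⟨fun q => W (q, 1), hW.comp (continuous_id.prodMk continuous_const),
    fun a x u => hWG a (x, u) 1, fun x u => hWp (x, u) 1, ?_⟩
  have hα : Continuous fun q : (X × ι) × unitInterval => W ((q.1.1, τ q.1.2), q.2) :=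
    hW.comp (((continuous_fst.comp continuous_fst).prodMk
      (continuous_of_discreteTopology.comp (continuous_snd.comp continuous_fst))).prodMk
        continuous_snd)
  have hβ : Continuous fun q : (X × ι) × unitInterval => H (q.1.1, q.2) q.1.2 :=
    (continuous_prod_of_discrete_right.2 fun i => (continuous_apply i).comp hH :
      Continuous fun r : (X × unitInterval) × ι => H r.1 r.2).comp
      (((continuous_fst.comp continuous_fst).prodMk continuous_snd).prodMk
        (continuous_snd.comp continuous_fst))
  obtain ⟨K, hK, hKG, hK0, hK1, hKp⟩ := hp.exists_fibrewise_homotopy_of_lifts (hX.prodFst ι) hα hβ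
    (fun a q t => hWG a (q.1, τ q.2) t) (fun a q t => hHG a q.1 t q.2)
    (fun q => by simp only [hWp, hHc]) fun q => by simp only [hW0, hH0]
  exact ⟨fun q i => K ((q.1, i), q.2),
    continuous_pi fun i => hK.comp ((continuous_fst.prodMk continuous_const).prodMk continuous_snd),
    fun a x t i => hKG a (x, i) t, fun x i => hK0 (x, i), fun x => funext fun i => hK1 (x, i),
    fun x t i => (hKp (x, i) t).trans (hWp _ 1)⟩

end Lifting

section SectionalCategory

variable {G : Type*} {E B : Type*} [TopologicalSpace E] [TopologicalSpace B]

/-- The condition on one open set of a cover in the definition of `eqSecat`. -/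
def HasGHomotopySectionOn (G : Type*) (σE : G → E → E) (σB : G → B → B) (p : E → B)
    (U : Set B) : Prop :=
  ∃ s : B → E, ContinuousOn s U ∧ (∀ a : G, ∀ b ∈ U, s (σB a b) = σE a (s b)) ∧
    GHomotopicOn G σB σB (p ∘ s) id U

theorem eqSecat_le_of_pullback {E' B' : Type*} [TopologicalSpace E'] [TopologicalSpace B']
    {σE : G → E → E} {σB : G → B → B} {σE' : G → E' → E'} {σB' : G → B' → B'}
    {p : E → B} {p' : E' → B'} {j : B' → B} (hj : Continuous j)
    (hjG : ∀ a y, j (σB' a y) = σB a (j y))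
    (h : ∀ U : Set B, IsOpen U → (∀ a, ∀ b ∈ U, σB a b ∈ U) →
      HasGHomotopySectionOn G σE σB p U → HasGHomotopySectionOn G σE' σB' p' (j ⁻¹' U)) :
    eqSecat G σE' σB' p' ≤ eqSecat G σE σB p := by
  refine le_sInf ?_
  rintro _ ⟨k, rfl, U, hUo, hUG, hUcov, hUs⟩
  refine sInf_le ⟨k, rfl, fun i => j ⁻¹' U i, fun i => (hUo i).preimage hj,
    fun i a y hy => ?_, fun y => hUcov (j y), fun i => h _ (hUo i) (hUG i) (hUs i)⟩
  rw [Set.mem_preimage, hjG]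
  exact hUG i a _ hy

theorem hasGHomotopySectionOn_of_subtype [Nonempty E] {σE : G → E → E} {σB : G → B → B}
    {p : E → B} {U : Set B} (hU : ∀ a, ∀ b ∈ U, σB a b ∈ U) {s : U → E} (hs : Continuous s)
    (hsG : ∀ a (b : U), s ⟨σB a b, hU a b b.2⟩ = σE a (s b)) {H : U × unitInterval → B}
    (hH : Continuous H) (hHG : ∀ a (b : U) t, H (⟨σB a b, hU a b b.2⟩, t) = σB a (H (b, t)))
    (hH0 : ∀ b, H (b, 0) = p (s b)) (hH1 : ∀ b, H (b, 1) = b) :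
    HasGHomotopySectionOn G σE σB p U := by
  classical
  refine ⟨fun b => if hb : b ∈ U then s ⟨b, hb⟩ else Classical.arbitrary E, ?_, ?_,
    fun q => if hq : q.1 ∈ U then H (⟨q.1, hq⟩, q.2) else q.1, ?_, ?_, ?_, ?_⟩
  · rw [continuousOn_iff_continuous_domRestrict]
    convert hs using 1
    funext b
    simp [b.2]
  · intro a b hb
    simp [hb, hU a b hb, ← hsG]
  · rw [continuousOn_iff_continuous_domRestrict]
    have hq : Continuous fun q : ↥(U ×ˢ Set.univ : Set (B × unitInterval)) =>
        ((⟨q.1.1, (Set.mem_prod.1 q.2).1⟩ : U), q.1.2) :=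
      ((continuous_fst.comp continuous_subtype_val).subtype_mk _).prodMk
        (continuous_snd.comp continuous_subtype_val)
    convert hH.comp hq using 1
    funext q
    simp [(Set.mem_prod.1 q.2).1]
  · intro b hb
    simp [hb, hH0]
  · intro b hb
    simp [hb, hH1]
  · intro a b hb t
    simp [hb, hU a b hb, ← hHG]

theorem HasGHomotopySectionOn.exists_subtype {σE : G → E → E} {σB : G → B → B} {p : E → B}
    {U : Set B} (hU : ∀ a, ∀ b ∈ U, σB a b ∈ U) (h : HasGHomotopySectionOn G σE σB p U) :
    ∃ s : U → E, Continuous s ∧ (∀ a (b : U), s ⟨σB a b, hU a b b.2⟩ = σE a (s b)) ∧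
      ∃ H : U × unitInterval → B, Continuous H ∧
        (∀ a (b : U) t, H (⟨σB a b, hU a b b.2⟩, t) = σB a (H (b, t))) ∧
        (∀ b, H (b, 0) = p (s b)) ∧ ∀ b, H (b, 1) = b := by
  obtain ⟨s, hs, hsG, H, hH, hH0, hH1, hHG⟩ := h
  exact ⟨fun b => s b, hs.domRestrict, fun a b => hsG a b b.2, fun q => H (q.1, q.2),
    hH.comp_continuous ((continuous_subtype_val.comp continuous_fst).prodMk continuous_snd)
      fun q => ⟨q.1.2, trivial⟩,
    fun a b t => hHG a b b.2 t, fun b => hH0 b b.2, fun b => hH1 b b.2⟩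

theorem hasGHomotopySectionOn_piNMap {G X : Type*} [TopologicalSpace X] [Nonempty X]
    {σ : G → X → X} (hσ : ∀ a, Continuous (σ a)) {n : ℕ} {V : Set (Fin n → X)}
    (hV : ∀ a, ∀ y ∈ V, diagAct σ n a y ∈ V) {γ : V × unitInterval → X} (hγ : Continuous γ)
    (hγG : ∀ a (y : V) u, γ (⟨diagAct σ n a y, hV a y y.2⟩, u) = σ a (γ (y, u)))
    {K : V × unitInterval → Fin n → X} (hK : Continuous K)
    (hKG : ∀ a (y : V) t, K (⟨diagAct σ n a y, hV a y y.2⟩, t) = diagAct σ n a (K (y, t)))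
    (hK0 : ∀ y i, K (y, 0) i = γ (y, seqTime n i)) (hK1 : ∀ y, K (y, 1) = y) :
    HasGHomotopySectionOn G (pathAct σ hσ) (diagAct σ n) (piNMap X n) V := by
  have : Nonempty C(unitInterval, X) := ⟨.const _ (Classical.arbitrary X)⟩
  let γ' : C(V, C(unitInterval, X)) := ContinuousMap.curry ⟨γ, hγ⟩
  refine hasGHomotopySectionOn_of_subtype hV (s := γ') γ'.continuous
    (fun a y => ContinuousMap.ext fun u => hγG a y u) hK hKG (fun y => funext (hK0 y)) hK1

end SectionalCategory

section Fibre

variable {G : Type*} {E B : Type*} [TopologicalSpace E] {p : E → B} {e : E}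

def fibreAct [SMul G E] (hpe : ∀ (a : G) (x : E), p x = p e → p (a • x) = p e) :
    G → {x : E // p x = p e} → {x : E // p x = p e} :=
  fun a x => ⟨a • x.1, hpe a x.1 x.2⟩

theorem isGAction_fibreAct [Group G] [TopologicalSpace G] [MulAction G E] [ContinuousSMul G E]
    (hpe : ∀ (a : G) (x : E), p x = p e → p (a • x) = p e) : IsGAction G (fibreAct hpe) :=
  (isGAction_smul E).subtype (S := {x | p x = p e}) hpe

def FibProd.ofFibre (p : E → B) (e : E) (n : ℕ) (y : Fin n → {x : E // p x = p e}) :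
    FibProd p n :=
  ⟨fun i => (y i).1, fun i j => by rw [(y i).2, (y j).2]⟩

theorem FibProd.continuous_ofFibre (n : ℕ) : Continuous (FibProd.ofFibre p e n) :=
  (continuous_pi fun i => continuous_subtype_val.comp (continuous_apply i)).subtype_mk _

theorem HasGHomotopySectionOn.fibre [TopologicalSpace B] [Group G] [TopologicalSpace G]
    [MulAction G E] [ContinuousSMul G E] [MulAction G B]
    (hp : IsGFibration G (fun (a : G) (x : E) => a • x) (fun (a : G) (b : B) => a • b) p)
    (hpe : ∀ (a : G) (x : E), p x = p e → p (a • x) = p e)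
    (hcF : ∀ a : G, Continuous (fibreAct hpe a))
    (hcomp : ∀ (a : G) (x y : E), p x = p y → p (a • x) = p (a • y)) {n : ℕ} (hn : 0 < n)
    {U : Set (FibProd p n)}
    (hUG : ∀ a, ∀ b ∈ U, fibProdAct (fun (a : G) (x : E) => a • x) p hcomp n a b ∈ U)
    (hU : HasGHomotopySectionOn G
      (parPathAct (fun (a : G) (x : E) => a • x) (fun a => continuous_const_smul a) p hcomp)
      (fibProdAct (fun (a : G) (x : E) => a • x) p hcomp n) (PiN p n) U) :
    HasGHomotopySectionOn G (pathAct (fibreAct hpe) hcF) (diagAct (fibreAct hpe) n)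
      (piNMap {x : E // p x = p e} n) (FibProd.ofFibre p e n ⁻¹' U) := by
  obtain ⟨s, hs, hsG, H, hH, hHG, hH0, hH1⟩ := hU.exists_subtype hUG
  set V := FibProd.ofFibre p e n ⁻¹' U
  have hVG : ∀ a, ∀ y ∈ V, diagAct (fibreAct hpe) n a y ∈ V := fun a y hy => hUG a _ hy
  let j : V → U := fun y => ⟨FibProd.ofFibre p e n y, y.2⟩
  have hj : Continuous j :=
    ((FibProd.continuous_ofFibre n).comp continuous_subtype_val).subtype_mk _
  let i₀ : Fin n := ⟨0, hn⟩
  let c : V × unitInterval → B := fun q => p ((H (j q.1, q.2)).1 i₀)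
  have hc1 : ∀ y, c (y, 1) = p e := fun y => by simp only [c, j, hH1]; exact (y.1 i₀).2
  have hHV : Continuous fun q : V × unitInterval => H (j q.1, q.2) :=
    hH.comp ((hj.comp continuous_fst).prodMk continuous_snd)
  obtain ⟨s', hs', hs'G, hs'p, K, hK, hKG, hK0, hK1, hKp⟩ :=
    hp.exists_transported_path (((isGAction_fibreAct hpe).diagAct n).subtype hVG) (seqTime n)
    (c := c) (hp.1.comp ((continuous_apply i₀).comp (continuous_subtype_val.comp hHV)))
    (fun a y t => (congrArg (fun x : FibProd p n => p (x.1 i₀)) (hHG a (j y) t)).trans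
      (hp.2.1 _ _))
    (s := fun q => (s (j q.1)).1 q.2)
    (continuous_eval.comp ((continuous_subtype_val.comp (hs.comp (hj.comp continuous_fst))).prodMk
      continuous_snd))
    (fun a y u => congrArg (fun γ : ParPath p => γ.1 u) (hsG a (j y)))
    (fun y u => by simp only [c, hH0]; exact (s (j y)).2 _ _)
    (H := fun q => (H (j q.1, q.2)).1) (continuous_subtype_val.comp hHV)
    (fun a y t i => congrArg (fun x : FibProd p n => x.1 i) (hHG a (j y) t))
    (fun y t i => (H (j y, t)).2 i i₀) fun y i => by rw [hH0]; rfl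
  have : Nonempty {x : E // p x = p e} := ⟨⟨e, rfl⟩⟩
  exact hasGHomotopySectionOn_piNMap hcF hVG
    (γ := fun q => ⟨s' q, (hs'p q.1 q.2).trans (hc1 q.1)⟩) (hs'.subtype_mk _)
    (fun a y u => Subtype.ext (hs'G a y u))
    (K := fun q i => ⟨K q i, (hKp q.1 q.2 i).trans (hc1 q.1)⟩)
    (continuous_pi fun i => ((continuous_apply i).comp hK).subtype_mk _)
    (fun a y t => funext fun i => Subtype.ext (hKG a y t i))
    (fun y i => Subtype.ext (hK0 y i))
    fun y => funext fun i => Subtype.ext <| by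
      show K (y, 1) i = (y.1 i).1
      rw [hK1]
      simp only [j, hH1]
      rfl

end Fibre

theorem stmt_6 {G : Type*} [Group G] [TopologicalSpace G]
    {E B : Type*} [TopologicalSpace E] [TopologicalSpace B]
    [MulAction G E] [ContinuousSMul G E] [MulAction G B]
    (p : E → B)
    (hp : IsGFibration G (fun (a : G) (e : E) => a • e) (fun (a : G) (b : B) => a • b) p)
    (e : E) (he : ∀ a : G, a • e = e) (n : ℕ) (hn : 2 ≤ n) :
    (∀ (a : G) (x : E), p x = p e → p (a • x) = p e) ∧
    eqTC G
        (fun (a : G) (x : {x : E // p x = p e}) =>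
          (⟨a • x.1, by
            have hpe : ∀ (g : G) (y : E), p (g • y) = g • p y := hp.2.1
            rw [hpe, x.2, ← hpe, he]⟩ : {x : E // p x = p e}))
        (fun a => by fun_prop) n ≤
      eqPTC G (fun (a : G) (x : E) => a • x) (fun a => continuous_const_smul a) p
        (fun a x y h => by rw [hp.2.1, hp.2.1, h]) n := by
  have hpG : ∀ (a : G) (x : E), p (a • x) = a • p x := hp.2.1
  have hpe : ∀ (a : G) (x : E), p x = p e → p (a • x) = p e := fun a x hx => by
    rw [hpG, hx, ← hpG, he]
  exact ⟨hpe, eqSecat_le_of_pullback (FibProd.continuous_ofFibre n) (fun _ _ => rfl)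
    fun U _ hUG hU => hU.fibre hp hpe _ _ (by omega) hUG⟩
end

section
/- Let G be a compact Lie group, n ≥ 2, and p : E → B a G-fibration with TC_{G,n}[p : E → B] = 1. Suppose there exists e ∈ E^G such that the fibre F := p^{-1}(p(e)) (a G-invariant subspace) is G-connected. Then F is G-contractible. -/
open Set

/-!
A global equivariant section `s` of `Π_n`, with its homotopy `K` from `Π_n ∘ s` to the identity,
joins the first and last coordinates of each `y ∈ E^n_B` by a path: back along the first
coordinate of `K(y, ·)`, along `s y`, and forward along the last coordinate of `K(y, ·)`.
Projected to `B`, this path is `β_y ∘ W` for the path `β_y` of base points of `K(y, ·)` and a loop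
`W` in `I` at `1`, so it is null-homotopic relative to its endpoints. Lifting this null-homotopy
through the `G`-fibration `p` pushes the path into the fibre of `y`. Taking `y = (x, e, …, e)` for
`x` in the fibre `F` of the fixed point `e` gives an equivariant contraction of `F` onto `e`.
-/

open unitInterval

universe u v

theorem ENat.mem_of_sInf_eq_of_ne_top {S : Set ℕ∞} {k : ℕ∞} (h : sInf S = k) (hk : k ≠ ⊤) :
    k ∈ S := by
  obtain rfl | hne := S.eq_empty_or_nonempty
  · exact absurd (h ▸ sInf_empty) hk
  · exact h ▸ csInf_mem hne

theorem Path.cast_continuous_family {ι X : Type*} [TopologicalSpace ι] [TopologicalSpace X]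
    {a b a' b' : ι → X} (γ : ∀ t, Path (a t) (b t)) (h : Continuous ↿γ)
    (ha : ∀ t, a' t = a t) (hb : ∀ t, b' t = b t) :
    Continuous ↿fun t => (γ t).cast (ha t) (hb t) :=
  h

def ContinuousMap.pathAt {X Y : Type*} [TopologicalSpace X] [TopologicalSpace Y]
    (H : C(X × I, Y)) (x : X) : Path (H (x, 0)) (H (x, 1)) where
  toFun t := H (x, t)
  source' := rfl
  target' := rfl

theorem ContinuousMap.continuous_uncurry_pathAt {X Y : Type*} [TopologicalSpace X]
    [TopologicalSpace Y] (H : C(X × I, Y)) : Continuous ↿H.pathAt :=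
  H.continuous

def unitInterval.idPath : Path (0 : I) 1 := ⟨ContinuousMap.id I, rfl, rfl⟩

@[simp]
theorem unitInterval.idPath_apply (t : I) : idPath t = t := rfl

theorem seqTime_zero {n : ℕ} (hn : 0 < n) : seqTime n ⟨0, hn⟩ = 0 := by
  ext; simp [seqTime]

theorem seqTime_last {n : ℕ} (hn : 2 ≤ n) : seqTime n ⟨n - 1, by omega⟩ = 1 := by
  have : (n : ℝ) - 1 ≠ 0 := by
    have : (2 : ℝ) ≤ n := by exact_mod_cast hn
    linarith
  ext; simp [seqTime, Nat.cast_sub (by omega : 1 ≤ n), this]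

theorem exists_section_of_eqSecat_eq_one {G E B : Type*} [TopologicalSpace E]
    [TopologicalSpace B] {σE : G → E → E} {σB : G → B → B} {p : E → B}
    (h : eqSecat G σE σB p = 1) :
    ∃ s : B → E, Continuous s ∧ (∀ a b, s (σB a b) = σE a (s b)) ∧
      ∃ K : B × I → B, Continuous K ∧ (∀ b, K (b, 0) = p (s b)) ∧ (∀ b, K (b, 1) = b) ∧
        ∀ a b t, K (σB a b, t) = σB a (K (b, t)) := by
  obtain ⟨k, hk, U, -, -, hcover, hsec⟩ := ENat.mem_of_sInf_eq_of_ne_top h ENat.one_ne_top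
  obtain rfl : k = 1 := by exact_mod_cast hk.symm
  have hU : U 0 = Set.univ := Set.eq_univ_of_forall fun b => by
    simpa [Fin.fin_one_eq_zero] using hcover b
  obtain ⟨s, hs, hsG, K, hK, hK0, hK1, hKG⟩ := hsec 0
  rw [hU, continuousOn_univ] at hs
  rw [hU, Set.univ_prod_univ, continuousOn_univ] at hK
  simp only [hU, Set.mem_univ, forall_const] at hsG hK0 hK1 hKG
  exact ⟨s, hs, hsG, K, hK, hK0, hK1, hKG⟩

theorem isGAction_fibProdAct {G E B : Type*} [Group G] [TopologicalSpace G] [TopologicalSpace E]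
    [MulAction G E] [ContinuousSMul G E] {p : E → B}
    (hpG : ∀ (a : G) e e', p e = p e' → p (a • e) = p (a • e')) (n : ℕ) :
    IsGAction G (fibProdAct (fun (a : G) (x : E) => a • x) p hpG n) :=
  ⟨fun y => Subtype.ext (funext fun i => one_smul G (y.1 i)),
    fun a b y => Subtype.ext (funext fun i => mul_smul a b (y.1 i)),
    by
      apply Continuous.subtype_mk
      exact continuous_pi fun i => continuous_fst.smul
        ((continuous_apply i).comp (continuous_subtype_val.comp continuous_snd))⟩

section Lifting

variable {G : Type*} [Group G] [TopologicalSpace G] {E : Type u} {B : Type v}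
  [TopologicalSpace E] [TopologicalSpace B] {σE : G → E → E} {σB : G → B → B} {p : E → B}

theorem IsGFibration.exists_lift (hp : IsGFibration G σE σB p) {X : Type u}
    [TopologicalSpace X] {σX : G → X → X} (hX : IsGAction G σX) {f : X → E}
    (hf : Continuous f) (hfG : ∀ a x, f (σX a x) = σE a (f x)) {h : X × I → B}
    (hh : Continuous h) (hhG : ∀ a x t, h (σX a x, t) = σB a (h (x, t)))
    (h0 : ∀ x, h (x, 0) = p (f x)) :
    ∃ L : X × I → E, Continuous L ∧ (∀ a x t, L (σX a x, t) = σE a (L (x, t))) ∧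
      (∀ x, L (x, 0) = f x) ∧ ∀ z, p (L z) = h z := by
  have hX' : IsGAction G fun a (x : ULift.{v} X) => ULift.up (σX a x.down) :=
    ⟨fun x => congrArg ULift.up (hX.1 x.down), fun a b x => congrArg ULift.up (hX.2.1 a b x.down),
      continuous_uliftUp.comp (hX.2.2.comp (continuous_fst.prodMk
        (continuous_uliftDown.comp continuous_snd)))⟩
  obtain ⟨L, hL, hLG, hL0, hLp⟩ := hp.2.2 (ULift.{v} X) inferInstance _ hX' (f ∘ ULift.down)
    (fun z => h (z.1.down, z.2)) (hf.comp continuous_uliftDown) (fun a x => hfG a x.down)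
    (hh.comp (continuous_uliftDown.prodMap continuous_id)) (fun a x t => hhG a x.down t)
    (fun x => h0 x.down)
  exact ⟨fun z => L (ULift.up z.1, z.2), hL.comp (continuous_uliftUp.prodMap continuous_id),
    fun a x t => hLG a (ULift.up x) t, fun x => hL0 (ULift.up x), fun z => hLp (ULift.up z.1) z.2⟩

theorem IsGFibration.exists_vertical_paths (hp : IsGFibration G σE σB p) {X : Type u}
    [TopologicalSpace X] {σX : G → X → X} (hX : IsGAction G σX) {f g : X → E}
    (γ : ∀ x, Path (f x) (g x)) (hγ : Continuous ↿γ)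
    (hγG : ∀ a x t, γ (σX a x) t = σE a (γ x t))
    {β : X × I → B} (hβ : Continuous β) (hβG : ∀ a x u, β (σX a x, u) = σB a (β (x, u)))
    (hβ1 : ∀ x, β (x, 1) = p (f x)) (W : Path (1 : I) 1)
    (hγβ : ∀ x t, p (γ x t) = β (x, W t)) :
    ∃ δ : ∀ x, Path (f x) (g x), Continuous ↿δ ∧ (∀ a x t, δ (σX a x) t = σE a (δ x t)) ∧
      ∀ x t, p (δ x t) = p (f x) := by
  have hXI : IsGAction G fun a (z : X × I) => (σX a z.1, z.2) :=
    ⟨fun z => by simp [hX.1], fun a b z => by simp [hX.2.1],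
      (hX.2.2.comp (continuous_fst.prodMk (continuous_fst.comp continuous_snd))).prodMk
        (continuous_snd.comp continuous_snd)⟩
  -- `σ (σ r * σ u)` runs from `r` to `1` as `u` runs over `I`
  obtain ⟨L, hL, hLG, hL0, hLp⟩ := hp.exists_lift hXI (f := fun z => γ z.1 z.2) hγ
    (fun a z => hγG a z.1 z.2) (h := fun w => β (w.1.1, σ (σ (W w.1.2) * σ w.2))) (by fun_prop)
    (fun a z t => hβG a z.1 _) (fun z => by simp [hγβ])
  replace hLG : ∀ a x t u, L ((σX a x, t), u) = σE a (L ((x, t), u)) :=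
    fun a x t u => hLG a (x, t) u
  have hLfib : ∀ x t u, (t = 0 ∨ t = 1 ∨ u = 1) → p (L ((x, t), u)) = p (f x) := by
    rintro x t u (rfl | rfl | rfl) <;> simp [hLp, hβ1]
  -- `δ x` runs around the three edges of the lifted square `L ((x, ·), ·)` that lie in the fibre
  let A : C(X × I, E) := ⟨fun z => L ((z.1, 0), z.2), by fun_prop⟩
  let M : C(X × I, E) := ⟨fun z => L (z, 1), by fun_prop⟩
  let Z : C(X × I, E) := ⟨fun z => L ((z.1, 1), z.2), by fun_prop⟩
  refine ⟨fun x => ((A.pathAt x).trans ((M.pathAt x).trans (Z.pathAt x).symm)).cast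
    (by simp [A, hL0]) (by simp [Z, hL0]), ?_, ?_, ?_⟩
  · exact Path.trans_continuous_family _ A.continuous_uncurry_pathAt _
      (Path.trans_continuous_family _ M.continuous_uncurry_pathAt _
        (Path.symm_continuous_family _ Z.continuous_uncurry_pathAt))
  · intro a x t
    simp only [Path.cast_coe, Path.trans_apply, Path.symm_apply]
    split_ifs <;> simp [ContinuousMap.pathAt, A, M, Z, hLG]
  · intro x t
    simp only [Path.cast_coe, Path.trans_apply, Path.symm_apply]
    split_ifs <;> simp [ContinuousMap.pathAt, A, M, Z, hLfib]

end Lifting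

section MotionPlanner

variable {G : Type*} {E : Type u} {B : Type v} [TopologicalSpace E] [TopologicalSpace B]
  {p : E → B} {n : ℕ}

theorem exists_paths_of_eqPTC_eq_one {σE : G → E → E} {hc : ∀ a, Continuous (σE a)}
    {hpG : ∀ a e e', p e = p e' → p (σE a e) = p (σE a e')} {σB : G → B → B}
    (hp : Continuous p) (hpσ : ∀ a e, p (σE a e) = σB a (p e)) (hn : 2 ≤ n)
    (htc : eqPTC G σE hc p hpG n = 1) :
    ∃ γ : ∀ y : FibProd p n, Path (y.1 ⟨0, by omega⟩) (y.1 ⟨n - 1, by omega⟩),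
      Continuous ↿γ ∧ (∀ a y t, γ (fibProdAct σE p hpG n a y) t = σE a (γ y t)) ∧
      ∃ β : FibProd p n × I → B, Continuous β ∧
        (∀ a y u, β (fibProdAct σE p hpG n a y, u) = σB a (β (y, u))) ∧
        (∀ y, β (y, 1) = p (y.1 ⟨0, by omega⟩)) ∧
        ∀ y t, p (γ y t) = β (y, (idPath.symm.trans ((Path.refl 0).trans idPath)) t) := by
  obtain ⟨s, hs, hsG, K, hK, hK0, hK1, hKG⟩ := exists_section_of_eqSecat_eq_one htc
  set i₀ : Fin n := ⟨0, by omega⟩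
  set i₁ : Fin n := ⟨n - 1, by omega⟩
  have hK0' : ∀ y i, (K (y, 0)).1 i = (s y).1 (seqTime n i) := fun y i => by rw [hK0]; rfl
  let ev (i : Fin n) : C(FibProd p n × I, E) :=
    ⟨fun z => (K z).1 i, (continuous_apply i).comp (continuous_subtype_val.comp hK)⟩
  let S : C(FibProd p n × I, E) :=
    ⟨fun z => (s z.1).1 z.2, continuous_eval.comp
      ((continuous_subtype_val.comp (hs.comp continuous_fst)).prodMk continuous_snd)⟩
  let γ (y : FibProd p n) : Path (y.1 i₀) (y.1 i₁) :=
    (((ev i₀).pathAt y).symm.trans (((S.pathAt y).cast (by simp [S, ev, hK0', i₀, seqTime_zero])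
      (by simp [S, ev, hK0', i₁, seqTime_last hn])).trans ((ev i₁).pathAt y))).cast
      (by simp [ev, hK1]) (by simp [ev, hK1])
  refine ⟨γ, ?_, fun a y t => ?_, fun z => p ((K z).1 i₀),
    hp.comp ((continuous_apply i₀).comp (continuous_subtype_val.comp hK)),
    fun a y u => by simp only [hKG]; exact hpσ a _, fun y => by simp [hK1], fun y t => ?_⟩
  · exact Path.cast_continuous_family _ (Path.trans_continuous_family _
      (Path.symm_continuous_family _ (ev i₀).continuous_uncurry_pathAt) _
      (Path.trans_continuous_family _
        (Path.cast_continuous_family _ S.continuous_uncurry_pathAt _ _) _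
        (ev i₁).continuous_uncurry_pathAt)) _ _
  · simp only [γ, Path.cast_coe, Path.trans_apply, Path.symm_apply]
    split_ifs <;> simp [ContinuousMap.pathAt, ev, S, hKG, hsG] <;> rfl
  · simp only [γ, Path.cast_coe, Path.trans_apply, Path.symm_apply]
    split_ifs <;> simp [ContinuousMap.pathAt, ev, S, hK0', (s y).2 _ (seqTime n i₀), (K _).2 i₁ i₀]

theorem exists_vertical_paths_of_eqPTC_eq_one [Group G] [TopologicalSpace G] [MulAction G E]
    [ContinuousSMul G E] [SMul G B]
    (hp : IsGFibration G (fun (a : G) (e : E) => a • e) (fun (a : G) (b : B) => a • b) p)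
    {hpG : ∀ (a : G) e e', p e = p e' → p (a • e) = p (a • e')} (hn : 2 ≤ n)
    (htc : eqPTC G (fun (a : G) (x : E) => a • x) (fun a => continuous_const_smul a) p hpG n = 1) :
    ∃ δ : ∀ y : FibProd p n, Path (y.1 ⟨0, by omega⟩) (y.1 ⟨n - 1, by omega⟩),
      Continuous ↿δ ∧
      (∀ a y t, δ (fibProdAct (fun (a : G) (x : E) => a • x) p hpG n a y) t = a • δ y t) ∧
      ∀ y t, p (δ y t) = p (y.1 ⟨0, by omega⟩) := by
  obtain ⟨γ, hγ, hγG, β, hβ, hβG, hβ1, hγβ⟩ := exists_paths_of_eqPTC_eq_one hp.1 hp.2.1 hn htc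
  exact hp.exists_vertical_paths (isGAction_fibProdAct hpG n) γ hγ hγG hβ hβG hβ1 _ hγβ

end MotionPlanner

theorem stmt_7 {G : Type*} [Group G] [TopologicalSpace G]
    {E B : Type*} [TopologicalSpace E] [TopologicalSpace B]
    [MulAction G E] [ContinuousSMul G E] [MulAction G B]
    (p : E → B)
    (hp : IsGFibration G (fun (a : G) (e : E) => a • e) (fun (a : G) (b : B) => a • b) p)
    (n : ℕ) (hn : 2 ≤ n)
    (htc : eqPTC G (fun (a : G) (x : E) => a • x) (fun a => continuous_const_smul a) p
      (fun a x y h => by rw [hp.2.1, hp.2.1, h]) n = 1)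
    (e : E) (he : ∀ a : G, a • e = e) :
    GContractible G
      (fun (a : G) (x : {x : E // p x = p e}) =>
        (⟨a • x.1, by
          have hpe : ∀ (g : G) (y : E), p (g • y) = g • p y := hp.2.1
          rw [hpe, x.2, ← hpe, he]⟩ : {x : E // p x = p e})) := by
  obtain ⟨δ, hδ, hδG, hδp⟩ := exists_vertical_paths_of_eqPTC_eq_one hp hn htc
  let c (x : {x : E // p x = p e}) : FibProd p n :=
    ⟨fun i => if (i : ℕ) = 0 then x.1 else e, fun i j => by dsimp only; split_ifs <;> simp [x.2]⟩
  have hc : Continuous c := by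
    refine Continuous.subtype_mk (continuous_pi fun i => ?_) _
    split_ifs
    exacts [continuous_subtype_val, continuous_const]
  have hcG : ∀ (a : G) x hx, c ⟨a • x.1, hx⟩ =
      fibProdAct (fun (a : G) (x : E) => a • x) p (fun a x y h => by rw [hp.2.1, hp.2.1, h]) n a
        (c x) := by
    refine fun a x hx => Subtype.ext (funext fun i => ?_)
    simp only [c, fibProdAct]
    split_ifs
    exacts [rfl, (he a).symm]
  refine ⟨⟨e, rfl⟩, fun z => ⟨δ (c z.1) z.2, (hδp _ _).trans (by simp [c, z.1.2])⟩,
    (hδ.comp ((hc.comp continuous_fst).prodMk continuous_snd)).subtype_mk _,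
    fun x => Subtype.ext ?_, fun x => ⟨1, Subtype.ext ?_⟩, fun a x t => Subtype.ext ?_⟩
  · exact (δ (c x)).source.trans (if_pos rfl : (if (0 : ℕ) = 0 then x.1 else e) = x.1)
  · exact (δ (c x)).target.trans ((if_neg (by show n - 1 ≠ 0; omega)).trans (one_smul G e).symm)
  · dsimp only
    rw [hcG, hδG]
end

section
/- Let G be a compact Lie group and let p : E → B and p' : E' → B be G-fibrations over the same G-space B which are fibrewise G-homotopy equivalent. Then for every n ≥ 2, TC_{G,n}[p : E → B] = TC_{G,n}[p' : E' → B]. -/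
open Set

/-! A fibrewise `G`-map `f : E → E'` induces `G`-maps `E^n_B → E'^n_B` and `E^I_B → E'^I_B`
commuting with `Π_n`. If `g ∘ f` is fibrewise `G`-homotopic to the identity, then a
`G`-homotopy section `s'` of `Π_n` for `p'` over `U` yields the `G`-homotopy section
`g_* ∘ s' ∘ f^n` of `Π_n` for `p` over `(f^n)⁻¹ U`, because `Π_n ∘ g_* ∘ s' ∘ f^n`
is `g^n ∘ Π_n ∘ s' ∘ f^n ≃ g^n ∘ f^n = (g ∘ f)^n ≃ id`. Applying this in both directions
gives the equality. -/

open Set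

theorem ContinuousOn.if_le {β γ : Type*} [TopologicalSpace β] [TopologicalSpace γ]
    {f g : β → ℝ} {f' g' : β → γ} {S : Set β}
    (hf' : ContinuousOn f' S) (hg' : ContinuousOn g' S)
    (hf : Continuous f) (hg : Continuous g)
    (hfg : ∀ x ∈ S, f x = g x → f' x = g' x) :
    ContinuousOn (fun x => if f x ≤ g x then f' x else g' x) S := by
  rw [continuousOn_iff_continuous_domRestrict] at hf' hg' ⊢
  exact Continuous.if_le hf' hg' (hf.comp continuous_subtype_val)
    (hg.comp continuous_subtype_val) (fun x h => hfg x.1 x.2 h)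

namespace unitInterval

noncomputable def stretchFirstHalf (t : unitInterval) : unitInterval :=
  projIcc 0 1 zero_le_one (2 * (t : ℝ))

noncomputable def stretchSecondHalf (t : unitInterval) : unitInterval :=
  projIcc 0 1 zero_le_one (2 * (t : ℝ) - 1)

theorem continuous_stretchFirstHalf : Continuous stretchFirstHalf :=
  continuous_projIcc.comp (by fun_prop)

theorem continuous_stretchSecondHalf : Continuous stretchSecondHalf :=
  continuous_projIcc.comp (by fun_prop)

theorem stretchFirstHalf_zero : stretchFirstHalf 0 = 0 :=
  projIcc_of_le_left _ (by simp)

theorem stretchFirstHalf_of_eq_half {t : unitInterval} (ht : (t : ℝ) = 1 / 2) :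
    stretchFirstHalf t = 1 :=
  projIcc_of_right_le _ (by rw [ht]; norm_num)

theorem stretchSecondHalf_of_eq_half {t : unitInterval} (ht : (t : ℝ) = 1 / 2) :
    stretchSecondHalf t = 0 :=
  projIcc_of_le_left _ (by rw [ht]; norm_num)

theorem stretchSecondHalf_one : stretchSecondHalf 1 = 1 :=
  projIcc_of_right_le _ (by norm_num)

end unitInterval

namespace GHomotopicOn

open unitInterval

variable {G X Y Z : Type*} [TopologicalSpace X] [TopologicalSpace Y] [TopologicalSpace Z]
  {σX : G → X → X} {σY : G → Y → Y} {σZ : G → Z → Z} {S T : Set X}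

theorem mono {f g : X → Y} (h : GHomotopicOn G σX σY f g T) (hST : S ⊆ T) :
    GHomotopicOn G σX σY f g S := by
  obtain ⟨H, hHc, hH0, hH1, hHe⟩ := h
  exact ⟨H, hHc.mono (prod_mono hST subset_rfl), fun x hx => hH0 x (hST hx),
    fun x hx => hH1 x (hST hx), fun a x hx => hHe a x (hST hx)⟩

theorem trans {f g k : X → Y} (h₁ : GHomotopicOn G σX σY f g S)
    (h₂ : GHomotopicOn G σX σY g k S) : GHomotopicOn G σX σY f k S := by
  obtain ⟨H₁, hH₁c, hH₁0, hH₁1, hH₁e⟩ := h₁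
  obtain ⟨H₂, hH₂c, hH₂0, hH₂1, hH₂e⟩ := h₂
  have hmaps : ∀ φ : unitInterval → unitInterval,
      MapsTo (fun q : X × unitInterval => (q.1, φ q.2)) (S ×ˢ univ) (S ×ˢ univ) :=
    fun _ _ hq => ⟨hq.1, mem_univ _⟩
  refine ⟨fun q => if (q.2 : ℝ) ≤ 1 / 2 then H₁ (q.1, stretchFirstHalf q.2)
      else H₂ (q.1, stretchSecondHalf q.2), ?_, ?_, ?_, ?_⟩
  · refine ContinuousOn.if_le
      (hH₁c.comp (continuous_fst.prodMk (continuous_stretchFirstHalf.comp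
        continuous_snd)).continuousOn (hmaps _))
      (hH₂c.comp (continuous_fst.prodMk (continuous_stretchSecondHalf.comp
        continuous_snd)).continuousOn (hmaps _)) (by fun_prop) continuous_const ?_
    rintro ⟨x, t⟩ ⟨hx, -⟩ ht
    simp only at ht ⊢
    rw [stretchFirstHalf_of_eq_half ht, stretchSecondHalf_of_eq_half ht, hH₁1 x hx, hH₂0 x hx]
  · intro x hx
    dsimp only
    rw [if_pos (by norm_num), stretchFirstHalf_zero, hH₁0 x hx]
  · intro x hx
    dsimp only
    rw [if_neg (by norm_num), stretchSecondHalf_one, hH₂1 x hx]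
  · intro a x hx t
    dsimp only
    split_ifs
    · exact hH₁e a x hx _
    · exact hH₂e a x hx _

theorem comp_left {f g : X → Y} (h : GHomotopicOn G σX σY f g S) {ψ : Y → Z}
    (hψ : Continuous ψ) (hψe : ∀ a y, ψ (σY a y) = σZ a (ψ y)) :
    GHomotopicOn G σX σZ (ψ ∘ f) (ψ ∘ g) S := by
  obtain ⟨H, hHc, hH0, hH1, hHe⟩ := h
  exact ⟨ψ ∘ H, hψ.comp_continuousOn hHc, fun x hx => congrArg ψ (hH0 x hx),
    fun x hx => congrArg ψ (hH1 x hx), fun a x hx t => by simp [hHe a x hx, hψe]⟩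

theorem comp_right {f g : Y → Z} {U : Set Y} (h : GHomotopicOn G σY σZ f g U) {F : X → Y}
    (hF : Continuous F) (hFe : ∀ a x, F (σX a x) = σY a (F x)) (hSU : MapsTo F S U) :
    GHomotopicOn G σX σZ (f ∘ F) (g ∘ F) S := by
  obtain ⟨H, hHc, hH0, hH1, hHe⟩ := h
  refine ⟨fun q => H (F q.1, q.2), hHc.comp (by fun_prop) fun q hq => ⟨hSU hq.1, mem_univ _⟩,
    fun x hx => hH0 _ (hSU hx), fun x hx => hH1 _ (hSU hx), fun a x hx t => ?_⟩
  simp only [hFe, hHe a _ (hSU hx)]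

end GHomotopicOn

theorem eqSecat_le_of_dominated {G E B E' B' : Type*}
    [TopologicalSpace E] [TopologicalSpace B] [TopologicalSpace E'] [TopologicalSpace B']
    {σE : G → E → E} {σB : G → B → B} {σE' : G → E' → E'} {σB' : G → B' → B'}
    {p : E → B} {p' : E' → B'}
    {F : B → B'} (hF : Continuous F) (hFe : ∀ a b, F (σB a b) = σB' a (F b))
    {Φ : E' → E} (hΦ : Continuous Φ) (hΦe : ∀ a e, Φ (σE' a e) = σE a (Φ e))
    {ψ : B' → B} (hψ : Continuous ψ) (hψe : ∀ a b, ψ (σB' a b) = σB a (ψ b))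
    (hcomm : ∀ e, p (Φ e) = ψ (p' e)) (hψF : GHomotopicOn G σB σB (ψ ∘ F) id univ) :
    eqSecat G σE σB p ≤ eqSecat G σE' σB' p' := by
  apply sInf_le_sInf
  rintro _ ⟨k, rfl, U, hUo, hUinv, hUcov, hsec⟩
  refine ⟨k, rfl, fun i => F ⁻¹' U i, fun i => (hUo i).preimage hF, fun i a b hb => ?_,
    fun b => hUcov (F b), fun i => ?_⟩
  · rw [mem_preimage, hFe]
    exact hUinv i a _ hb
  obtain ⟨s, hsc, hse, hs⟩ := hsec i
  refine ⟨Φ ∘ s ∘ F, hΦ.comp_continuousOn (hsc.comp hF.continuousOn (mapsTo_preimage F _)),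
    fun a b hb => by simp only [Function.comp_apply, hFe, hse a _ hb, hΦe], ?_⟩
  have hpΦ : p ∘ (Φ ∘ s ∘ F) = ψ ∘ (p' ∘ s) ∘ F := funext fun b => hcomm _
  rw [hpΦ]
  exact ((hs.comp_left hψ hψe).comp_right hF hFe (mapsTo_preimage F _)).trans
    (hψF.mono (subset_univ _))

section Fibrewise

variable {G E E' B : Type*} {p : E → B} {p' : E' → B} {σE : G → E → E} {σE' : G → E' → E'}

def FibProd.map (f : E → E') (hf : ∀ x, p' (f x) = p x) (n : ℕ) :
    FibProd p n → FibProd p' n :=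
  fun x => ⟨fun i => f (x.1 i), fun i j => by rw [hf, hf]; exact x.2 i j⟩

theorem FibProd.map_fibProdAct {f : E → E'} (hf : ∀ x, p' (f x) = p x)
    (hfe : ∀ a x, f (σE a x) = σE' a (f x))
    (hpE : ∀ a e e', p e = p e' → p (σE a e) = p (σE a e'))
    (hpE' : ∀ a e e', p' e = p' e' → p' (σE' a e) = p' (σE' a e')) (n : ℕ) (a : G)
    (x : FibProd p n) :
    FibProd.map f hf n (fibProdAct σE p hpE n a x) =
      fibProdAct σE' p' hpE' n a (FibProd.map f hf n x) :=
  Subtype.ext (funext fun _ => hfe a _)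

variable [TopologicalSpace E] [TopologicalSpace E']

def ParPath.map (f : C(E, E')) (hf : ∀ x, p' (f x) = p x) : ParPath p → ParPath p' :=
  fun γ => ⟨f.comp γ.1, fun s t => by simp only [ContinuousMap.comp_apply, hf]; exact γ.2 s t⟩

theorem FibProd.continuous_map {f : E → E'} (hfc : Continuous f) (hf : ∀ x, p' (f x) = p x)
    (n : ℕ) : Continuous (FibProd.map f hf n) :=
  Continuous.subtype_mk (continuous_pi fun i =>
    hfc.comp ((continuous_apply i).comp continuous_subtype_val)) _

theorem ParPath.continuous_map (f : C(E, E')) (hf : ∀ x, p' (f x) = p x) :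
    Continuous (ParPath.map f hf) :=
  Continuous.subtype_mk ((ContinuousMap.continuous_postcomp f).comp continuous_subtype_val) _

theorem ParPath.map_parPathAct (f : C(E, E')) (hf : ∀ x, p' (f x) = p x)
    (hfe : ∀ a x, f (σE a x) = σE' a (f x))
    (hcE : ∀ a, Continuous (σE a)) (hcE' : ∀ a, Continuous (σE' a))
    (hpE : ∀ a e e', p e = p e' → p (σE a e) = p (σE a e'))
    (hpE' : ∀ a e e', p' e = p' e' → p' (σE' a e) = p' (σE' a e')) (a : G) (γ : ParPath p) :
    ParPath.map f hf (parPathAct σE hcE p hpE a γ) =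
      parPathAct σE' hcE' p' hpE' a (ParPath.map f hf γ) :=
  Subtype.ext (ContinuousMap.ext fun _ => hfe a _)

theorem PiN_parPathMap (f : C(E, E')) (hf : ∀ x, p' (f x) = p x) (n : ℕ) (γ : ParPath p) :
    PiN p' n (ParPath.map f hf γ) = FibProd.map f hf n (PiN p n γ) :=
  rfl

theorem FibrewiseGHomotopic.fibProdMap {f₀ f₁ : E → E'}
    (h : FibrewiseGHomotopic G σE σE' p p' f₀ f₁)
    (hpE : ∀ a e e', p e = p e' → p (σE a e) = p (σE a e'))
    (hpE' : ∀ a e e', p' e = p' e' → p' (σE' a e) = p' (σE' a e'))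
    (hf₀ : ∀ x, p' (f₀ x) = p x) (hf₁ : ∀ x, p' (f₁ x) = p x) (n : ℕ) :
    GHomotopicOn G (fibProdAct σE p hpE n) (fibProdAct σE' p' hpE' n)
      (FibProd.map f₀ hf₀ n) (FibProd.map f₁ hf₁ n) univ := by
  obtain ⟨H, hHc, hH0, hH1, hHe, hHp⟩ := h
  refine ⟨fun q => ⟨fun i => H (q.1.1 i, q.2), fun i j => by rw [hHp, hHp]; exact q.1.2 i j⟩,
    Continuous.continuousOn ?_, fun x _ => Subtype.ext (funext fun _ => hH0 _),
    fun x _ => Subtype.ext (funext fun _ => hH1 _),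
    fun a x _ t => Subtype.ext (funext fun _ => hHe a _ t)⟩
  exact Continuous.subtype_mk (continuous_pi fun i => hHc.comp
    (((continuous_apply i).comp (continuous_subtype_val.comp continuous_fst)).prodMk
      continuous_snd)) _

theorem eqPTC_le_of_fibrewise_dominated
    (hcE : ∀ a, Continuous (σE a)) (hcE' : ∀ a, Continuous (σE' a))
    (hpE : ∀ a e e', p e = p e' → p (σE a e) = p (σE a e'))
    (hpE' : ∀ a e e', p' e = p' e' → p' (σE' a e) = p' (σE' a e'))
    {f : E → E'} (hfc : Continuous f) (hfe : ∀ a x, f (σE a x) = σE' a (f x))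
    (hfp : ∀ x, p' (f x) = p x)
    {g : E' → E} (hgc : Continuous g) (hge : ∀ a x, g (σE' a x) = σE a (g x))
    (hgp : ∀ x, p (g x) = p' x)
    (hgf : FibrewiseGHomotopic G σE σE p p (g ∘ f) id) (n : ℕ) :
    eqPTC G σE hcE p hpE n ≤ eqPTC G σE' hcE' p' hpE' n :=
  eqSecat_le_of_dominated (FibProd.continuous_map hfc hfp n)
    (FibProd.map_fibProdAct hfp hfe hpE hpE' n)
    (ParPath.continuous_map ⟨g, hgc⟩ hgp)
    (ParPath.map_parPathAct ⟨g, hgc⟩ hgp hge hcE' hcE hpE' hpE)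
    (FibProd.continuous_map hgc hgp n) (FibProd.map_fibProdAct hgp hge hpE' hpE n)
    (PiN_parPathMap ⟨g, hgc⟩ hgp n)
    (hgf.fibProdMap hpE hpE (fun x => (hgp _).trans (hfp x)) (fun _ => rfl) n)

end Fibrewise

theorem stmt_11 {G : Type*} [Group G] [TopologicalSpace G]
    {E E' B : Type*} [TopologicalSpace E] [TopologicalSpace E']
    [TopologicalSpace B] [MulAction G E] [ContinuousSMul G E] [MulAction G E']
    [ContinuousSMul G E'] [MulAction G B]
    (p : E → B) (p' : E' → B)
    (hp : IsGFibration G (fun (a : G) (x : E) => a • x) (fun (a : G) (b : B) => a • b) p)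
    (hp' : IsGFibration G (fun (a : G) (x : E') => a • x) (fun (a : G) (b : B) => a • b) p')
    -- `p` and `p'` are fibrewise `G`-homotopy equivalent:
    (f : E → E') (hfc : Continuous f) (hfe : ∀ (a : G) (x : E), f (a • x) = a • f x)
    (hfp : ∀ x, p' (f x) = p x)
    (g : E' → E) (hgc : Continuous g) (hge : ∀ (a : G) (x : E'), g (a • x) = a • g x)
    (hgp : ∀ x, p (g x) = p' x)
    (hgf : FibrewiseGHomotopic G (fun (a : G) (x : E) => a • x)
      (fun (a : G) (x : E) => a • x) p p (g ∘ f) id)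
    (hfg : FibrewiseGHomotopic G (fun (a : G) (x : E') => a • x)
      (fun (a : G) (x : E') => a • x) p' p' (f ∘ g) id)
    (n : ℕ) :
    eqPTC G (fun (a : G) (x : E) => a • x) (fun a => continuous_const_smul a) p
        (fun a x y h => by rw [hp.2.1, hp.2.1, h]) n =
      eqPTC G (fun (a : G) (x : E') => a • x) (fun a => continuous_const_smul a) p'
        (fun a x y h => by rw [hp'.2.1, hp'.2.1, h]) n :=
  le_antisymm
    (eqPTC_le_of_fibrewise_dominated _ _ _ _ hfc hfe hfp hgc hge hgp hgf n)
    (eqPTC_le_of_fibrewise_dominated _ _ _ _ hgc hge hgp hfc hfe hfp hfg n)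
end

section
/- Let G be a compact Lie group, n ≥ 2, and p : E → B a G-fibration such that E is G-contractible. Then cat_G(E^n_B) ≤ TC_{G,n}[p : E → B]. -/
open Set

/-!
If `π : P → X` is `G`-homotopic to a map into a single orbit, then every invariant open set `U`
carrying an equivariant homotopy section `s` of `π` is `G`-categorical: the inclusion of `U` is
`G`-homotopic to `π ∘ s`, hence into the orbit. So `cat_G(X) ≤ secat_G(π)`. For `π = Π_n`, sliding
the sample times `i/(n-1)` of a fibrewise path back to `0` deforms `Π_n γ` into the diagonal point
at `γ 0`, and a `G`-contraction of `E` then moves the diagonal into one orbit.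
-/

local notation "I" => unitInterval

section Homotopy

variable {G X Y Z P : Type*} [TopologicalSpace X] [TopologicalSpace Y]

theorem continuousOn_prod_univ_iff {H : X × I → Y} {S : Set X} :
    ContinuousOn H (S ×ˢ univ) ↔ Continuous fun z : S × I => H (z.1, z.2) := by
  rw [continuousOn_iff_continuous_domRestrict]
  constructor
  · intro h
    exact h.comp (f := fun z : S × I => (⟨(z.1.1, z.2), z.1.2, trivial⟩ : ↥(S ×ˢ univ)))
      (by fun_prop)
  · intro h
    exact h.comp (f := fun z : ↥(S ×ˢ (univ : Set I)) => ((⟨z.1.1, z.2.1⟩ : S), z.1.2))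
      (by fun_prop)

namespace GHomotopicOn

variable {σX : G → X → X} {σY : G → Y → Y} {f g h : X → Y} {S : Set X}

theorem symm (hfg : GHomotopicOn G σX σY f g S) : GHomotopicOn G σX σY g f S := by
  obtain ⟨H, hH, h0, h1, hequiv⟩ := hfg
  refine ⟨fun z => H (z.1, unitInterval.symm z.2), ?_, fun x hx => ?_, fun x hx => ?_,
    fun a x hx _ => hequiv a x hx _⟩
  · exact hH.comp (by fun_prop) fun z hz => ⟨hz.1, trivial⟩
  · simpa using h1 x hx
  · simpa using h0 x hx

theorem trans_s13 (hfg : GHomotopicOn G σX σY f g S) (hgh : GHomotopicOn G σX σY g h S) :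
    GHomotopicOn G σX σY f h S := by
  obtain ⟨H₁, hH₁, h₁0, h₁1, h₁eq⟩ := hfg
  obtain ⟨H₂, hH₂, h₂0, h₂1, h₂eq⟩ := hgh
  let r : ℝ → I := projIcc 0 1 zero_le_one
  refine ⟨fun z => if (z.2 : ℝ) ≤ 1 / 2 then H₁ (z.1, r (2 * z.2)) else H₂ (z.1, r (2 * z.2 - 1)),
    ?_, fun x hx => ?_, fun x hx => ?_, fun a x hx t => ?_⟩
  · rw [continuousOn_prod_univ_iff] at *
    refine Continuous.if_le ?_ ?_ (by fun_prop) continuous_const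
      fun z (hz : (z.2 : ℝ) = 1 / 2) => ?_
    · exact hH₁.comp (f := fun z : S × I => (z.1, r (2 * z.2))) (by fun_prop)
    · exact hH₂.comp (f := fun z : S × I => (z.1, r (2 * z.2 - 1))) (by fun_prop)
    · have h₁ : r (2 * z.2) = 1 := by norm_num [r, hz]
      have h₀ : r (2 * z.2 - 1) = 0 := by norm_num [r, hz]
      rw [h₁, h₀, h₁1 _ z.1.2, h₂0 _ z.1.2]
  · simp [r, h₁0 x hx]
  · norm_num [r, h₂1 x hx]
  · dsimp only
    split_ifs
    · exact h₁eq a x hx _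
    · exact h₂eq a x hx _

theorem comp [TopologicalSpace P] {σP : G → P → P} {f g : P → Y} {T : Set P}
    (hfg : GHomotopicOn G σP σY f g T) {s : X → P} (hs : ContinuousOn s S) (hsT : MapsTo s S T)
    (hs_eq : ∀ a, ∀ x ∈ S, s (σX a x) = σP a (s x)) :
    GHomotopicOn G σX σY (f ∘ s) (g ∘ s) S := by
  obtain ⟨H, hH, h0, h1, hequiv⟩ := hfg
  refine ⟨fun z => H (s z.1, z.2), ?_, fun x hx => h0 _ (hsT hx), fun x hx => h1 _ (hsT hx),
    fun a x hx t => ?_⟩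
  · exact hH.comp (hs.prodMap continuousOn_id) fun z hz => ⟨hsT hz.1, trivial⟩
  · simp only [hs_eq a x hx, hequiv a _ (hsT hx)]

theorem postcomp [TopologicalSpace Z] {σZ : G → Z → Z} {φ : Y → Z} (hφ : Continuous φ)
    (hφ_eq : ∀ a y, φ (σY a y) = σZ a (φ y)) (hfg : GHomotopicOn G σX σY f g S) :
    GHomotopicOn G σX σZ (φ ∘ f) (φ ∘ g) S := by
  obtain ⟨H, hH, h0, h1, hequiv⟩ := hfg
  refine ⟨φ ∘ H, hφ.comp_continuousOn hH, fun x hx => ?_, fun x hx => ?_, fun a x hx t => ?_⟩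
  · simp [h0 x hx]
  · simp [h1 x hx]
  · simp [hequiv a x hx, hφ_eq]

end GHomotopicOn

theorem GContractible.exists_gHomotopicOn {σ : G → X → X} (h : GContractible G σ) :
    ∃ x₀ k, GHomotopicOn G σ σ id k univ ∧ ∀ x, ∃ a, k x = σ a x₀ := by
  obtain ⟨x₀, H, hH, h0, h1, hequiv⟩ := h
  exact ⟨x₀, fun x => H (x, 1),
    ⟨H, hH.continuousOn, fun x _ => h0 x, fun _ _ => rfl, fun a x _ t => hequiv a x t⟩, h1⟩

theorem eqCat_le_eqSecat [TopologicalSpace P] {σP : G → P → P} {σX : G → X → X}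
    {π c : P → X} (x₀ : X) (hπ : GHomotopicOn G σP σX π c univ)
    (hc : ∀ y, ∃ a, c y = σX a x₀) :
    eqCat G σX ≤ eqSecat G σP σX π := by
  refine sInf_le_sInf ?_
  rintro N ⟨k, rfl, U, hUo, hUinv, hUcov, hsec⟩
  refine ⟨k, rfl, U, hUcov, fun i => ⟨hUo i, hUinv i, x₀, ?_⟩⟩
  obtain ⟨s, hs, hs_eq, hsπ⟩ := hsec i
  obtain ⟨H, hH, h0, h1, hequiv⟩ := hsπ.symm.trans_s13 (hπ.comp hs (mapsTo_univ _ _) hs_eq)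
  exact ⟨H, hH, h0, fun x hx => by rw [h1 x hx]; exact hc (s x), hequiv⟩

end Homotopy

section FibreProduct

variable {G E B : Type*} [TopologicalSpace E] {σE : G → E → E}
  {hc : ∀ a : G, Continuous (σE a)} {p : E → B}
  {hp : ∀ a : G, ∀ e e' : E, p e = p e' → p (σE a e) = p (σE a e')} {n : ℕ}

def FibProd.diag (p : E → B) (n : ℕ) (e : E) : FibProd p n := ⟨fun _ => e, fun _ _ => rfl⟩

theorem FibProd.continuous_diag : Continuous (FibProd.diag p n) :=
  (continuous_pi fun _ => continuous_id).subtype_mk _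

theorem ParPath.continuous_eval (t : I) : Continuous fun γ : ParPath p => γ.1 t :=
  (continuous_eval_const t).comp continuous_subtype_val

theorem gHomotopicOn_piN_diag_eval_zero :
    GHomotopicOn G (parPathAct σE hc p hp) (fibProdAct σE p hp n) (PiN p n)
      (fun γ => FibProd.diag p n (γ.1 0)) univ := by
  refine ⟨fun z => ⟨fun i => z.1.1 (seqTime n i * unitInterval.symm z.2), fun _ _ => z.1.2 _ _⟩,
    Continuous.continuousOn ?_, fun γ _ => ?_, fun γ _ => ?_, fun _ _ _ _ => rfl⟩
  · refine (continuous_pi fun i => ?_).subtype_mk _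
    exact continuous_eval.comp
      ((continuous_subtype_val.comp continuous_fst).prodMk (by fun_prop))
  · refine Subtype.ext (funext fun i => ?_)
    simp [PiN]
  · refine Subtype.ext (funext fun i => ?_)
    simp [FibProd.diag]

theorem GContractible.piN_gHomotopicOn_orbit (hE : GContractible G σE) :
    ∃ x₀ c, GHomotopicOn G (parPathAct σE hc p hp) (fibProdAct σE p hp n) (PiN p n) c univ ∧
      ∀ γ, ∃ a, c γ = fibProdAct σE p hp n a x₀ := by
  obtain ⟨e₀, k, hk, hk_orbit⟩ := hE.exists_gHomotopicOn
  have hdiag := hk.postcomp (σZ := fibProdAct σE p hp n) FibProd.continuous_diag fun _ _ => rfl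
  have hdiag_eval := hdiag.comp (σX := parPathAct σE hc p hp) (S := univ)
    (ParPath.continuous_eval 0).continuousOn (mapsTo_univ _ _) fun _ _ _ => rfl
  refine ⟨FibProd.diag p n e₀, _, gHomotopicOn_piN_diag_eval_zero.trans_s13 hdiag_eval, fun γ => ?_⟩
  obtain ⟨a, ha⟩ := hk_orbit (γ.1 0)
  exact ⟨a, congrArg (FibProd.diag p n) ha⟩

end FibreProduct

theorem stmt_13 {G : Type*} [Group G] [TopologicalSpace G]
    {E B : Type*} [TopologicalSpace E] [TopologicalSpace B]
    [MulAction G E] [ContinuousSMul G E] [MulAction G B]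
    (p : E → B)
    (hp : IsGFibration G (fun (a : G) (x : E) => a • x) (fun (a : G) (b : B) => a • b) p)
    (n : ℕ)
    (hcontr : GContractible G (fun (a : G) (x : E) => a • x)) :
    eqCat G (fibProdAct (fun (a : G) (x : E) => a • x) p
        (fun a x y h => by rw [hp.2.1, hp.2.1, h]) n) ≤
      eqPTC G (fun (a : G) (x : E) => a • x) (fun a => continuous_const_smul a) p
        (fun a x y h => by rw [hp.2.1, hp.2.1, h]) n := by
  obtain ⟨x₀, c, hPiN, hc_orbit⟩ := hcontr.piN_gHomotopicOn_orbit (p := p) (n := n)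
    (hc := fun a => continuous_const_smul a) (hp := fun a x y h => by rw [hp.2.1, hp.2.1, h])
  exact eqCat_le_eqSecat x₀ hPiN hc_orbit
end
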